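/- For the explicit counterexample operator H (built from |ψ_AB⟩ = (6|01⟩−9|10⟩−10|11⟩)/√217, |ψ_AC⟩ = (−2|00⟩−4|01⟩−|10⟩+5|11⟩)/√46, |ψ_BC⟩ = (−6|00⟩−|01⟩−4|10⟩)/√53, weights 1/6 each plus identities) the von Neumann entropy satisfies S(H) > S(H_target), where S(H_target) = (1/2)log₂2 + 3·(1/6)log₂6 ≈ 1.7925 bits; i.e. the counterexample to majorization does not violate the entropy-minimization (original spin alignment) statement. -/

import Mathlib

open Matrix Finset ComplexOrder

noncomputable section

abbrev Q3 : Type := Fin 2 × Fin 2 × Fin 2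

/-- Ky Fan `r`-sum: the largest possible sum of `r` eigenvalues of a Hermitian matrix. -/
noncomputable def kyFan {n : Type*} [Fintype n] [DecidableEq n]
    {A : Matrix n n ℂ} (hA : A.IsHermitian) (r : ℕ) : ℝ :=
  sSup {x : ℝ | ∃ s : Finset n, s.card = r ∧ x = ∑ i ∈ s, hA.eigenvalues i}

/-- Eigenvalue majorization of Hermitian matrices. -/
def Majorized {n : Type*} [Fintype n] [DecidableEq n]
    {A B : Matrix n n ℂ} (hA : A.IsHermitian) (hB : B.IsHermitian) : Prop :=
  (∀ r : ℕ, kyFan hA r ≤ kyFan hB r) ∧ A.trace = B.trace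

/-- Eigenvalues of a Hermitian matrix sorted in nonincreasing order. -/
noncomputable def sortedEigDesc {n : ℕ} {A : Matrix (Fin n) (Fin n) ℂ}
    (hA : A.IsHermitian) : Fin n → ℝ :=
  fun i => (hA.eigenvalues ∘ Tuple.sort hA.eigenvalues) i.rev

def IsDensity {n : Type*} [Fintype n] [DecidableEq n] (ρ : Matrix n n ℂ) : Prop :=
  ρ.PosSemidef ∧ ρ.trace = 1

def P0 : Matrix (Fin 2) (Fin 2) ℂ := fun i j => if i = 0 ∧ j = 0 then 1 else 0

def P00 : Matrix (Fin 2 × Fin 2) (Fin 2 × Fin 2) ℂ :=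
  fun p q => P0 p.1 q.1 * P0 p.2 q.2

/-- Projector onto a pure two-qubit state. -/
def proj2 (v : Fin 2 × Fin 2 → ℂ) : Matrix (Fin 2 × Fin 2) (Fin 2 × Fin 2) ℂ :=
  fun p q => v p * (starRingEnd ℂ) (v q)

/-- Projector onto a pure three-qubit state. -/
def projQ3 (v : Q3 → ℂ) : Matrix Q3 Q3 ℂ :=
  fun p q => v p * (starRingEnd ℂ) (v q)

/-- Embed a two-body operator on qubits A,B, acting as identity on C. -/
def embAB (M : Matrix (Fin 2 × Fin 2) (Fin 2 × Fin 2) ℂ) : Matrix Q3 Q3 ℂ :=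
  fun p q => M (p.1, p.2.1) (q.1, q.2.1) * (if p.2.2 = q.2.2 then 1 else 0)

/-- Embed a two-body operator on qubits A,C, acting as identity on B. -/
def embAC (M : Matrix (Fin 2 × Fin 2) (Fin 2 × Fin 2) ℂ) : Matrix Q3 Q3 ℂ :=
  fun p q => M (p.1, p.2.2) (q.1, q.2.2) * (if p.2.1 = q.2.1 then 1 else 0)

/-- Embed a two-body operator on qubits B,C, acting as identity on A. -/
def embBC (M : Matrix (Fin 2 × Fin 2) (Fin 2 × Fin 2) ℂ) : Matrix Q3 Q3 ℂ :=
  fun p q => M p.2 q.2 * (if p.1 = q.1 then 1 else 0)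

def embA (M : Matrix (Fin 2) (Fin 2) ℂ) : Matrix Q3 Q3 ℂ :=
  fun p q => M p.1 q.1 * (if p.2 = q.2 then 1 else 0)

def embB (M : Matrix (Fin 2) (Fin 2) ℂ) : Matrix Q3 Q3 ℂ :=
  fun p q => M p.2.1 q.2.1 * (if (p.1, p.2.2) = (q.1, q.2.2) then 1 else 0)

def embC (M : Matrix (Fin 2) (Fin 2) ℂ) : Matrix Q3 Q3 ℂ :=
  fun p q => M p.2.2 q.2.2 * (if (p.1, p.2.1) = (q.1, q.2.1) then 1 else 0)

def margA (ρ : Matrix Q3 Q3 ℂ) : Matrix (Fin 2) (Fin 2) ℂ :=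
  fun i j => ∑ b : Fin 2, ∑ c : Fin 2, ρ (i, b, c) (j, b, c)

def margB (ρ : Matrix Q3 Q3 ℂ) : Matrix (Fin 2) (Fin 2) ℂ :=
  fun i j => ∑ a : Fin 2, ∑ c : Fin 2, ρ (a, i, c) (a, j, c)

def margC (ρ : Matrix Q3 Q3 ℂ) : Matrix (Fin 2) (Fin 2) ℂ :=
  fun i j => ∑ a : Fin 2, ∑ b : Fin 2, ρ (a, b, i) (a, b, j)

def margAB (ρ : Matrix Q3 Q3 ℂ) : Matrix (Fin 2 × Fin 2) (Fin 2 × Fin 2) ℂ :=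
  fun p q => ∑ c : Fin 2, ρ (p.1, p.2, c) (q.1, q.2, c)

def margAC (ρ : Matrix Q3 Q3 ℂ) : Matrix (Fin 2 × Fin 2) (Fin 2 × Fin 2) ℂ :=
  fun p q => ∑ b : Fin 2, ρ (p.1, b, p.2) (q.1, b, q.2)

def margBC (ρ : Matrix Q3 Q3 ℂ) : Matrix (Fin 2 × Fin 2) (Fin 2 × Fin 2) ℂ :=
  fun p q => ∑ a : Fin 2, ρ (a, p.1, p.2) (a, q.1, q.2)

def sigmaY : Matrix (Fin 2) (Fin 2) ℂ := !![0, -Complex.I; Complex.I, 0]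

/-- The alignment target `H_target = (1/6)(P₀⊗P₀⊗I + P₀⊗I⊗P₀ + I⊗P₀⊗P₀)`. -/
def Htarget : Matrix Q3 Q3 ℂ := (1/6 : ℂ) • (embAB P00 + embAC P00 + embBC P00)

/-- The alignment operator built from three two-body pure states. -/
def Hof (u v w : Fin 2 × Fin 2 → ℂ) : Matrix Q3 Q3 ℂ :=
  (1/6 : ℂ) • (embAB (proj2 u) + embAC (proj2 v) + embBC (proj2 w))

end


noncomputable def psiAB : Fin 2 × Fin 2 → ℂ :=
  fun p => (((![![(0:ℝ), 6], ![-9, -10]] p.1 p.2) / Real.sqrt 217 : ℝ) : ℂ)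

noncomputable def psiAC : Fin 2 × Fin 2 → ℂ :=
  fun p => (((![![(-2:ℝ), -4], ![-1, 5]] p.1 p.2) / Real.sqrt 46 : ℝ) : ℂ)

noncomputable def psiBC : Fin 2 × Fin 2 → ℂ :=
  fun p => (((![![(-6:ℝ), -1], ![-4, 0]] p.1 p.2) / Real.sqrt 53 : ℝ) : ℂ)

/-- Von Neumann entropy in bits, `S(A) = -∑ λᵢ log₂ λᵢ`. -/
noncomputable def vNEntropy {n : Type*} [Fintype n] [DecidableEq n]
    {A : Matrix n n ℂ} (hA : A.IsHermitian) : ℝ :=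
  ∑ i, -(hA.eigenvalues i * Real.logb 2 (hA.eigenvalues i))

/-!
`H_target` is diagonal in the computational basis, with diagonal `(1/2, 1/6, 1/6, 1/6, 0, 0, 0, 0)`,
and its entropy can be read off. For `H`, which is positive semidefinite of trace one, Jensen's
inequality for the concave logarithm, applied to the eigenvalues with themselves as weights, gives
`S(H) ≥ -log₂ tr H²`. An exact computation gives `tr H² = 169/644`, and `(644/169)² > 12` means
`-log₂ tr H² > ½ log₂ 12 = S(H_target)`.
-/

open Polynomial in
theorem Matrix.IsHermitian.map_eigenvalues_eq_of_eq_diagonal {n 𝕜 : Type*} [Fintype n]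
    [DecidableEq n] [RCLike 𝕜] {A : Matrix n n 𝕜} (hA : A.IsHermitian) {d : n → ℝ}
    (h : A = diagonal fun i => (d i : 𝕜)) :
    Finset.univ.val.map hA.eigenvalues = Finset.univ.val.map d := by
  apply Multiset.map_injective (RCLike.ofReal_injective (K := 𝕜))
  rw [Multiset.map_map, ← hA.roots_charpoly_eq_eigenvalues, h, charpoly_diagonal,
    Finset.prod_eq_multiset_prod]
  simpa [Multiset.map_map, Function.comp_def] using
    roots_multiset_prod_X_sub_C (Finset.univ.val.map fun i => (d i : 𝕜))

theorem Matrix.IsHermitian.trace_pow_eq_sum_eigenvalues_pow {n 𝕜 : Type*} [Fintype n]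
    [DecidableEq n] [RCLike 𝕜] {A : Matrix n n 𝕜} (hA : A.IsHermitian) (k : ℕ) :
    (A ^ k).trace = ∑ i, (hA.eigenvalues i : 𝕜) ^ k := by
  conv_lhs => rw [hA.spectral_theorem, ← map_pow, Unitary.conjStarAlgAut_apply, trace_mul_cycle,
    Unitary.coe_star_mul_self, one_mul, diagonal_pow, trace_diagonal]
  rfl

theorem Real.sum_mul_log_le_log_sum_sq {ι : Type*} [Fintype ι] {w : ι → ℝ}
    (hw : ∀ i, 0 ≤ w i) (hw1 : ∑ i, w i = 1) :
    ∑ i, w i * Real.log (w i) ≤ Real.log (∑ i, w i ^ 2) := by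
  classical
  have hsupp {f : ι → ℝ} (hf : ∀ i, w i = 0 → f i = 0) :
      ∑ i ∈ Finset.univ.filter (w · ≠ 0), f i = ∑ i, f i :=
    Finset.sum_filter_of_ne fun i _ hfi hwi => hfi (hf i hwi)
  -- Jensen on the support of `w`, where the points `w i` lie in the domain `(0, ∞)` of `log`
  have hjensen := strictConcaveOn_log_Ioi.concaveOn.le_map_sum (p := w)
    (fun i _ => hw i) ((hsupp fun i hi => hi).trans hw1)
    (fun i hi => lt_of_le_of_ne (hw i) (Finset.mem_filter.1 hi).2.symm)
  simp only [smul_eq_mul, ← sq] at hjensen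
  rwa [hsupp fun i hi => by simp [hi], hsupp fun i hi => by simp [hi]] at hjensen

theorem vNEntropy_eq_of_eq_diagonal {n : Type*} [Fintype n] [DecidableEq n]
    {A : Matrix n n ℂ} (hA : A.IsHermitian) {d : n → ℝ} (h : A = diagonal fun i => (d i : ℂ)) :
    vNEntropy hA = ∑ i, -(d i * Real.logb 2 (d i)) := by
  have := congrArg (fun s => (s.map fun x : ℝ => -(x * Real.logb 2 x)).sum)
    (hA.map_eigenvalues_eq_of_eq_diagonal h)
  simpa only [vNEntropy, Multiset.map_map, Function.comp_def, ← Finset.sum_eq_multiset_sum]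
    using this

theorem neg_logb_trace_sq_le_vNEntropy {n : Type*} [Fintype n] [DecidableEq n]
    {A : Matrix n n ℂ} (hA : A.IsHermitian) (hA₀ : A.PosSemidef) (hA₁ : A.trace = 1) :
    -Real.logb 2 (A ^ 2).trace.re ≤ vNEntropy hA := by
  have hsum : ∑ i, hA.eigenvalues i = 1 := by
    simpa using congrArg Complex.re (hA.trace_eq_sum_eigenvalues.symm.trans hA₁)
  have hsq : (A ^ 2).trace.re = ∑ i, hA.eigenvalues i ^ 2 := by
    rw [hA.trace_pow_eq_sum_eigenvalues_pow]
    norm_cast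
  have hentropy : vNEntropy hA = -(∑ i, hA.eigenvalues i * Real.log (hA.eigenvalues i)) /
      Real.log 2 := by
    simp only [vNEntropy, Real.logb, neg_div, Finset.sum_div, ← Finset.sum_neg_distrib,
      mul_div_assoc]
  rw [hsq, hentropy, Real.logb, neg_div]
  gcongr
  exact Real.sum_mul_log_le_log_sum_sq hA₀.eigenvalues_nonneg hsum

theorem posSemidef_proj2 (v : Fin 2 × Fin 2 → ℂ) : (proj2 v).PosSemidef :=
  posSemidef_vecMulVec_self_star v

theorem Matrix.PosSemidef.embAB {M : Matrix (Fin 2 × Fin 2) (Fin 2 × Fin 2) ℂ}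
    (hM : M.PosSemidef) : (embAB M).PosSemidef :=
  (hM.kronecker (PosSemidef.one (n := Fin 2))).submatrix fun p : Q3 => ((p.1, p.2.1), p.2.2)

theorem Matrix.PosSemidef.embAC {M : Matrix (Fin 2 × Fin 2) (Fin 2 × Fin 2) ℂ}
    (hM : M.PosSemidef) : (embAC M).PosSemidef :=
  (hM.kronecker (PosSemidef.one (n := Fin 2))).submatrix fun p : Q3 => ((p.1, p.2.2), p.2.1)

theorem Matrix.PosSemidef.embBC {M : Matrix (Fin 2 × Fin 2) (Fin 2 × Fin 2) ℂ}
    (hM : M.PosSemidef) : (embBC M).PosSemidef :=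
  (hM.kronecker (PosSemidef.one (n := Fin 2))).submatrix fun p : Q3 => (p.2, p.1)

theorem Hof_posSemidef (u v w : Fin 2 × Fin 2 → ℂ) : (Hof u v w).PosSemidef :=
  ((((posSemidef_proj2 u).embAB.add (posSemidef_proj2 v).embAC).add
    (posSemidef_proj2 w).embBC).smul (by norm_num [Complex.le_def]))

theorem proj2_ofReal_div_sqrt (c : Fin 2 → Fin 2 → ℝ) {N : ℝ} (hN : 0 ≤ N) :
    proj2 (fun p => ((c p.1 p.2 / √N : ℝ) : ℂ)) =
      fun p q => ((c p.1 p.2 * c q.1 q.2 / N : ℝ) : ℂ) := by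
  ext p q
  rw [proj2, Complex.conj_ofReal, ← Complex.ofReal_mul, div_mul_div_comm, Real.mul_self_sqrt hN]

theorem trace_Hof_psi : (Hof psiAB psiAC psiBC).trace = 1 := by
  unfold Hof psiAB psiAC psiBC
  rw [proj2_ofReal_div_sqrt _ (by norm_num : (0:ℝ) ≤ 217),
    proj2_ofReal_div_sqrt _ (by norm_num : (0:ℝ) ≤ 46),
    proj2_ofReal_div_sqrt _ (by norm_num : (0:ℝ) ≤ 53)]
  simp [Matrix.trace, embAB, embAC, embBC, Fintype.sum_prod_type]
  norm_num

theorem trace_sq_Hof_psi : (Hof psiAB psiAC psiBC ^ 2).trace = 169 / 644 := by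
  unfold Hof psiAB psiAC psiBC
  rw [proj2_ofReal_div_sqrt _ (by norm_num : (0:ℝ) ≤ 217),
    proj2_ofReal_div_sqrt _ (by norm_num : (0:ℝ) ≤ 46),
    proj2_ofReal_div_sqrt _ (by norm_num : (0:ℝ) ≤ 53)]
  simp [sq, Matrix.trace, Matrix.mul_apply, embAB, embAC, embBC, Fintype.sum_prod_type]
  norm_num

noncomputable def targetDiag (p : Q3) : ℝ :=
  ((if p.1 = 0 ∧ p.2.1 = 0 then 1 else 0) + (if p.1 = 0 ∧ p.2.2 = 0 then 1 else 0) +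
    (if p.2.1 = 0 ∧ p.2.2 = 0 then 1 else 0)) / 6

theorem Htarget_eq_diagonal : Htarget = diagonal fun p => (targetDiag p : ℂ) := by
  ext ⟨a, b, c⟩ ⟨a', b', c'⟩
  fin_cases a <;> fin_cases b <;> fin_cases c <;> fin_cases a' <;> fin_cases b' <;> fin_cases c' <;>
    norm_num [Htarget, embAB, embAC, embBC, P00, P0, targetDiag, diagonal_apply]

theorem vNEntropy_Htarget (hT : Htarget.IsHermitian) :
    vNEntropy hT = 1/2 * Real.logb 2 2 + 3 * (1/6 * Real.logb 2 6) := by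
  rw [vNEntropy_eq_of_eq_diagonal hT Htarget_eq_diagonal]
  norm_num [Fintype.sum_prod_type, targetDiag]
  rw [one_div, one_div, Real.logb_inv, Real.logb_inv, Real.logb_self_eq_one one_lt_two]
  ring

theorem target_entropy_lt_neg_logb_169_div_644 :
    1/2 * Real.logb 2 2 + 3 * (1/6 * Real.logb 2 6) < -Real.logb 2 (169/644) := by
  have h12 : 1/2 * Real.logb 2 2 + 3 * (1/6 * Real.logb 2 6) = Real.logb 2 12 / 2 := by
    rw [show (12 : ℝ) = 2 * 6 by norm_num, Real.logb_mul (by norm_num) (by norm_num)]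
    ring
  have hsq : -Real.logb 2 (169/644) = Real.logb 2 ((644/169) ^ 2) / 2 := by
    rw [Real.logb_pow, ← Real.logb_inv]
    norm_num
  rw [h12, hsq]
  gcongr <;> norm_num

theorem stmt19 (hH : (Hof psiAB psiAC psiBC).IsHermitian) (hT : Htarget.IsHermitian) :
    vNEntropy hT = 1/2 * Real.logb 2 2 + 3 * (1/6 * Real.logb 2 6) ∧
    vNEntropy hT < vNEntropy hH := by
  refine ⟨vNEntropy_Htarget hT, ?_⟩
  calc vNEntropy hT = 1/2 * Real.logb 2 2 + 3 * (1/6 * Real.logb 2 6) := vNEntropy_Htarget hT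
    _ < -Real.logb 2 (169/644) := target_entropy_lt_neg_logb_169_div_644
    _ = -Real.logb 2 (Hof psiAB psiAC psiBC ^ 2).trace.re := by rw [trace_sq_Hof_psi]; norm_num
    _ ≤ vNEntropy hH :=
      neg_logb_trace_sq_le_vNEntropy hH (Hof_posSemidef _ _ _) trace_Hof_psi
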